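/- arXiv:2012.11702 — 2 statements merged into one kernel-verified Lean document; each statement's English description precedes it below -/
import Mathlib

section
/- Let α be a nonnegative random variable defined as α = max_{i=1,...,M} X_i, where X_1, ..., X_M are random variables each satisfying E[δ^{X_i}] ≤ e^{β(δ−1)} for some δ > 1 and β > 0. Then E[α] ≤ log( M e^{β(δ−1)} ) / log δ. In particular, if δ is chosen so that M e^{β(δ−1)} ≤ δ^δ, then E[α] ≤ δ. -/
/-!
Since `δ > 0`, the map `x ↦ δ ^ x` is monotone, so `δ ^ (max_i X_i) ≤ ∑_i δ ^ (X_i)` pointwise,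
and taking expectations gives `E[δ ^ α] ≤ M e^{β(δ-1)}`. Jensen's inequality for the convex map
`x ↦ δ ^ x` gives `δ ^ E[α] ≤ E[δ ^ α]`, and taking logarithms yields the bound. Integrability of
`α` comes from `0 ≤ α ≤ δ ^ α / log δ`.
-/

open MeasureTheory

namespace Real

lemma rpow_iSup_le_sum_rpow {ι : Type*} [Fintype ι] [Nonempty ι] {b : ℝ} (hb : 0 < b)
    (x : ι → ℝ) : b ^ (⨆ i, x i) ≤ ∑ i, b ^ x i := by
  obtain ⟨j, hj⟩ := exists_eq_ciSup_of_finite (f := x)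
  rw [← hj]
  exact Finset.single_le_sum (fun i _ => (rpow_pos_of_pos hb (x i)).le) (Finset.mem_univ j)

lemma le_rpow_div_log {b : ℝ} (hb : 1 < b) (x : ℝ) : x ≤ b ^ x / log b := by
  rw [le_div_iff₀ (log_pos hb), rpow_def_of_pos (zero_lt_one.trans hb), mul_comm (log b)]
  linarith [add_one_le_exp (x * log b)]

end Real

section

variable {Ω : Type*} [MeasurableSpace Ω] {P : Measure Ω} {b : ℝ}

lemma integrable_of_nonneg_of_integrable_rpow {f : Ω → ℝ} (hb : 1 < b)
    (hf : AEStronglyMeasurable f P) (hf_nonneg : ∀ ω, 0 ≤ f ω)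
    (hbf : Integrable (fun ω => b ^ f ω) P) : Integrable f P := by
  refine (hbf.div_const (Real.log b)).mono' hf (Filter.Eventually.of_forall fun ω => ?_)
  rw [Real.norm_eq_abs, abs_of_nonneg (hf_nonneg ω)]
  exact Real.le_rpow_div_log hb (f ω)

lemma rpow_integral_le_integral_rpow [IsProbabilityMeasure P] {f : Ω → ℝ} (hb : 0 < b)
    (hf : Integrable f P) (hbf : Integrable (fun ω => b ^ f ω) P) :
    b ^ (∫ ω, f ω ∂P) ≤ ∫ ω, b ^ f ω ∂P :=
  (convexOn_rpow_left hb).map_integral_le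
    (continuous_const.rpow continuous_id fun _ => Or.inl hb.ne').continuousOn isClosed_univ
    (Filter.Eventually.of_forall fun _ => Set.mem_univ _) hf hbf

lemma rpow_integral_iSup_le_sum_integral_rpow [IsProbabilityMeasure P] {ι : Type*} [Fintype ι]
    [Nonempty ι] {X : ι → Ω → ℝ} (hb : 1 < b) (hX : ∀ i, Measurable (X i))
    (hbX : ∀ i, Integrable (fun ω => b ^ X i ω) P) (hnonneg : ∀ ω, 0 ≤ ⨆ i, X i ω) :
    b ^ (∫ ω, ⨆ i, X i ω ∂P) ≤ ∑ i, ∫ ω, b ^ X i ω ∂P := by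
  have hb0 : 0 < b := zero_lt_one.trans hb
  have hpt : ∀ ω, b ^ (⨆ i, X i ω) ≤ ∑ i, b ^ X i ω :=
    fun ω => Real.rpow_iSup_le_sum_rpow hb0 _
  have hsum : Integrable (fun ω => ∑ i, b ^ X i ω) P := integrable_finsetSum _ fun i _ => hbX i
  have hsup_meas : Measurable fun ω => ⨆ i, X i ω := Measurable.iSup hX
  have hbsup : Integrable (fun ω => b ^ (⨆ i, X i ω)) P :=
    hsum.mono' (measurable_const.pow hsup_meas).aestronglyMeasurable
      (Filter.Eventually.of_forall fun ω => by
        rw [Real.norm_eq_abs, abs_of_pos (Real.rpow_pos_of_pos hb0 _)]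
        exact hpt ω)
  have hsup := integrable_of_nonneg_of_integrable_rpow hb hsup_meas.aestronglyMeasurable
    hnonneg hbsup
  calc b ^ (∫ ω, ⨆ i, X i ω ∂P) ≤ ∫ ω, b ^ (⨆ i, X i ω) ∂P :=
        rpow_integral_le_integral_rpow hb0 hsup hbsup
    _ ≤ ∫ ω, ∑ i, b ^ X i ω ∂P := integral_mono hbsup hsum hpt
    _ = ∑ i, ∫ ω, b ^ X i ω ∂P := integral_finsetSum _ fun i _ => hbX i

end

theorem expected_max_bound_general {Ω : Type*} [MeasurableSpace Ω]
    (P : Measure Ω) [IsProbabilityMeasure P] (M : ℕ) (hM : 0 < M)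
    (X : Fin M → Ω → ℝ) (hmeas : ∀ i, Measurable (X i))
    (δ β : ℝ) (hδ : 1 < δ)
    (hint : ∀ i, Integrable (fun ω => δ ^ (X i ω)) P)
    (hX : ∀ i, ∫ ω, δ ^ (X i ω) ∂P ≤ Real.exp (β * (δ - 1)))
    (α : Ω → ℝ) (hα : ∀ ω, α ω = ⨆ i, X i ω) (hnn : ∀ ω, 0 ≤ α ω) :
    (∫ ω, α ω ∂P ≤ Real.log ((M : ℝ) * Real.exp (β * (δ - 1))) / Real.log δ) ∧
    ((M : ℝ) * Real.exp (β * (δ - 1)) ≤ δ ^ δ → ∫ ω, α ω ∂P ≤ δ) := by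
  have hδ0 : 0 < δ := zero_lt_one.trans hδ
  have hlog : 0 < Real.log δ := Real.log_pos hδ
  have : Nonempty (Fin M) := ⟨⟨0, hM⟩⟩
  obtain rfl : α = fun ω => ⨆ i, X i ω := funext hα
  have hmoment : δ ^ (∫ ω, ⨆ i, X i ω ∂P) ≤ M * Real.exp (β * (δ - 1)) :=
    calc δ ^ (∫ ω, ⨆ i, X i ω ∂P) ≤ ∑ i, ∫ ω, δ ^ X i ω ∂P :=
          rpow_integral_iSup_le_sum_integral_rpow hδ hmeas hint hnn
      _ ≤ ∑ _i : Fin M, Real.exp (β * (δ - 1)) := Finset.sum_le_sum fun i _ => hX i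
      _ = M * Real.exp (β * (δ - 1)) := by simp
  have hmain : ∫ ω, ⨆ i, X i ω ∂P ≤ Real.log (M * Real.exp (β * (δ - 1))) / Real.log δ := by
    rw [le_div_iff₀ hlog, ← Real.log_rpow hδ0]
    exact Real.log_le_log (Real.rpow_pos_of_pos hδ0 _) hmoment
  refine ⟨hmain, fun h => hmain.trans ?_⟩
  rw [div_le_iff₀ hlog, ← Real.log_rpow hδ0]
  exact Real.log_le_log (by positivity) h

/-- let `α = max_{i=1..M} X_i` be a nonnegative random variable where each
`X_i` satisfies `E[δ^{X_i}] ≤ e^{β(δ-1)}` for some `δ > 1`, `β > 0`. Then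
`E[α] ≤ log(M e^{β(δ-1)}) / log δ`; in particular, if `M e^{β(δ-1)} ≤ δ^δ` then
`E[α] ≤ δ`. -/
theorem expected_max_bound {Ω : Type*} [MeasurableSpace Ω]
    (P : Measure Ω) [IsProbabilityMeasure P] (M : ℕ) (hM : 0 < M)
    (X : Fin M → Ω → ℝ) (hmeas : ∀ i, Measurable (X i))
    (δ β : ℝ) (hδ : 1 < δ) (hβ : 0 < β)
    (hint : ∀ i, Integrable (fun ω => δ ^ (X i ω)) P)
    (hX : ∀ i, ∫ ω, δ ^ (X i ω) ∂P ≤ Real.exp (β * (δ - 1)))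
    (α : Ω → ℝ) (hα : ∀ ω, α ω = ⨆ i, X i ω) (hnn : ∀ ω, 0 ≤ α ω) :
    (∫ ω, α ω ∂P ≤ Real.log ((M : ℝ) * Real.exp (β * (δ - 1))) / Real.log δ) ∧
    ((M : ℝ) * Real.exp (β * (δ - 1)) ≤ δ ^ δ → ∫ ω, α ω ∂P ≤ δ) :=
  expected_max_bound_general P M hM X hmeas δ β hδ hint hX α hα hnn
end

section
/- For every positive integer K, there exists an instance of the single-job coflow DAG scheduling problem on an m×m switch (m > 2K) with μ = 4K² coflows, critical-path size T and aggregate size Δ both equal to 2Kd, whose optimal makespan is at least (2K+1)·K·d = Ω(√μ·(Δ + T)). -/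
/-- Effective size of an `m × m` demand matrix. -/
def effSize {m : ℕ} (A : Fin m → Fin m → ℕ) : ℕ :=
  max (Finset.univ.sup fun s : Fin m => ∑ r, A s r)
    (Finset.univ.sup fun r : Fin m => ∑ s, A s r)

/-- A feasible schedule of length `T` for a multi-stage job with coflows
`Dm c : Fin m → Fin m → ℕ` and Starts-After precedence relation `prec`:
all transmissions occur before `T`, each time slot's transmissions (over all
coflows) form a matching of the switch, every flow receives its demanded number
of slots, and if `prec c c'` then every flow of `c` finishes before any flow of
`c'` starts. -/
def DAGFeasible (μ m T : ℕ) (Dm : Fin μ → Fin m → Fin m → ℕ)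
    (prec : Fin μ → Fin μ → Prop) (M : ℕ → Fin μ → Fin m → Fin m → Bool) : Prop :=
  (∀ t c s r, M t c s r = true → t < T) ∧
  (∀ t c c' s r r', M t c s r = true → M t c' s r' = true → c = c' ∧ r = r') ∧
  (∀ t c c' s s' r, M t c s r = true → M t c' s' r = true → c = c' ∧ s = s') ∧
  (∀ c s r, ((Finset.range T).filter fun t => M t c s r = true).card = Dm c s r) ∧
  (∀ c c', prec c c' → ∀ t t' s s' r r',
    M t c s r = true → M t' c' s' r' = true → t < t')

/-!
Put the `4K²` coflows on `2K` levels of `2K` coflows, every coflow of level `i` being one flow of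
size `d` from server `i` to server `i + 1`, and let every coflow of level `i + 1` start after the
first `K` ("early") coflows of level `i`. Each coflow has effective size `d` and a chain climbs one
level per step, so `T = 2Kd`; each server sends and receives at most `2Kd` in total, so `Δ = 2Kd`.
But all coflows of a level share the port pair `(i, i + 1)` and so are served one slot at a time:
by induction no coflow of level `i` transmits before `iKd`, since the `Kd` slots of the early
coflows of level `i - 1` lie in `[(i - 1)Kd, t)`. The `2Kd` slots of the last level then lie in
`[(2K - 1)Kd, T)`, whence `T ≥ (2K + 1)Kd`.
-/

open Finset Function

section EffSize

variable {m : ℕ}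

theorem rowSum_le_effSize (A : Fin m → Fin m → ℕ) (s : Fin m) : ∑ r, A s r ≤ effSize A :=
  le_max_of_le_left (le_sup (f := fun s => ∑ r, A s r) (mem_univ s))

theorem effSize_le {A : Fin m → Fin m → ℕ} {b : ℕ} (hrow : ∀ s, ∑ r, A s r ≤ b)
    (hcol : ∀ r, ∑ s, A s r ≤ b) : effSize A ≤ b :=
  max_le (Finset.sup_le fun s _ => hrow s) (Finset.sup_le fun r _ => hcol r)

theorem rowSum_single (a b s : Fin m) (d : ℕ) :
    ∑ r, Matrix.single a b d s r = if a = s then d else 0 := by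
  simp [Matrix.single_apply, ite_and]

theorem colSum_single (a b r : Fin m) (d : ℕ) :
    ∑ s, Matrix.single a b d s r = if b = r then d else 0 := by
  simp [Matrix.single_apply, ite_and]

theorem effSize_single (a b : Fin m) (d : ℕ) : effSize (Matrix.single a b d) = d := by
  refine le_antisymm (effSize_le (fun s => ?_) (fun r => ?_)) ?_
  · rw [rowSum_single]; split_ifs <;> simp
  · rw [colSum_single]; split_ifs <;> simp
  · simpa [rowSum_single] using rowSum_le_effSize (Matrix.single a b d) a

end EffSize

theorem sum_ite_comp_eq_of_injective {ι α M : Type*} [Fintype ι] [DecidableEq α]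
    [AddCommMonoid M] {f : ι → α} (hf : Injective f) (a : α) (x : M) :
    ∑ i, (if f i = a then x else 0) = if a ∈ Set.range f then x else 0 := by
  rw [← sum_image (f := fun b => if b = a then x else 0) hf.injOn, sum_ite_eq']
  simp

namespace DAGFeasible

variable {μ m T : ℕ} {Dm : Fin μ → Fin m → Fin m → ℕ} {prec : Fin μ → Fin μ → Prop}
  {M : ℕ → Fin μ → Fin m → Fin m → Bool}

theorem card_mul_le_sub (hM : DAGFeasible μ m T Dm prec M) {P : Finset (Fin μ)} {s r : Fin m}
    {d a b : ℕ} (hdem : ∀ c ∈ P, Dm c s r = d)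
    (htime : ∀ c ∈ P, ∀ t, M t c s r = true → a ≤ t ∧ t < b) :
    #P * d ≤ b - a := by
  obtain ⟨-, hinput, -, hcount, -⟩ := hM
  set slots : Fin μ → Finset ℕ := fun c => (range T).filter fun t => M t c s r = true
  have hdisj : (P : Set (Fin μ)).PairwiseDisjoint slots := fun c _ c' _ hne =>
    disjoint_left.2 fun t ht ht' =>
      hne (hinput t c c' s r r (mem_filter.1 ht).2 (mem_filter.1 ht').2).1
  calc #P * d = #(P.biUnion slots) := by
        rw [card_biUnion hdisj, sum_congr rfl fun c hc => (hcount c s r).trans (hdem c hc),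
          sum_const, smul_eq_mul]
    _ ≤ #(Ico a b) := card_le_card fun t ht => by
        obtain ⟨c, hc, ht⟩ := mem_biUnion.1 ht
        exact mem_Ico.2 (htime c hc t (mem_filter.1 ht).2)
    _ = b - a := Nat.card_Ico a b

end DAGFeasible

namespace GapInstance

variable {K m : ℕ}

def coflowEquiv (K : ℕ) : Fin (4 * K ^ 2) ≃ Fin (2 * K) × Fin (2 * K) :=
  (finCongr (by ring)).trans finProdFinEquiv.symm

def level (c : Fin (4 * K ^ 2)) : Fin (2 * K) := (coflowEquiv K c).1

def IsEarly (c : Fin (4 * K ^ 2)) : Prop := ((coflowEquiv K c).2 : ℕ) < K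

def server (hm : 2 * K < m) : Fin (2 * K + 1) → Fin m := Fin.castLE hm

def demand (hm : 2 * K < m) (d : ℕ) (c : Fin (4 * K ^ 2)) : Fin m → Fin m → ℕ :=
  Matrix.single (server hm (level c).castSucc) (server hm (level c).succ) d

def StartsAfter (c c' : Fin (4 * K ^ 2)) : Prop := IsEarly c ∧ (level c' : ℕ) = level c + 1

def firstCoflows (i : Fin (2 * K)) (n : ℕ) (hn : n ≤ 2 * K) : Finset (Fin (4 * K ^ 2)) :=
  univ.map ⟨fun j => (coflowEquiv K).symm (i, Fin.castLE hn j),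
    (coflowEquiv K).symm.injective.comp
      ((Prod.mk_right_injective i).comp (Fin.castLE_injective hn))⟩

theorem card_firstCoflows (i : Fin (2 * K)) (n : ℕ) (hn : n ≤ 2 * K) :
    #(firstCoflows i n hn) = n := by
  simp [firstCoflows]

theorem level_of_mem_firstCoflows {i : Fin (2 * K)} {n : ℕ} {hn : n ≤ 2 * K}
    {c : Fin (4 * K ^ 2)} (hc : c ∈ firstCoflows i n hn) :
    level c = i ∧ ((coflowEquiv K c).2 : ℕ) < n := by
  obtain ⟨j, -, rfl⟩ := mem_map.1 hc
  simp [level]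

theorem sum_comp_level {M : Type*} [AddCommMonoid M] (f : Fin (2 * K) → M) :
    ∑ c, f (level c) = (2 * K) • ∑ i, f i := by
  rw [← (coflowEquiv K).symm.sum_comp, Fintype.sum_prod_type, smul_sum]
  simp [level]

theorem server_injective (hm : 2 * K < m) : Injective (server hm) := Fin.castLE_injective hm

theorem effSize_demand (hm : 2 * K < m) (d : ℕ) (c : Fin (4 * K ^ 2)) :
    effSize (demand hm d c) = d :=
  effSize_single _ _ d

theorem effSize_sum_demand (hK : 0 < K) (hm : 2 * K < m) (d : ℕ) :
    effSize (fun s r => ∑ c, demand hm d c s r) = 2 * K * d := by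
  have hrow (s : Fin m) : ∑ r, ∑ c, demand hm d c s r
      = 2 * K * if s ∈ Set.range (server hm ∘ Fin.castSucc) then d else 0 := by
    rw [sum_comm]
    simp only [demand, rowSum_single]
    rw [sum_comp_level (fun i => if server hm i.castSucc = s then d else 0), smul_eq_mul,
      ← sum_ite_comp_eq_of_injective ((server_injective hm).comp (Fin.castSucc_injective _))]
    rfl
  have hcol (r : Fin m) : ∑ s, ∑ c, demand hm d c s r
      = 2 * K * if r ∈ Set.range (server hm ∘ Fin.succ) then d else 0 := by
    rw [sum_comm]
    simp only [demand, colSum_single]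
    rw [sum_comp_level (fun i => if server hm i.succ = r then d else 0), smul_eq_mul,
      ← sum_ite_comp_eq_of_injective ((server_injective hm).comp (Fin.succ_injective _))]
    rfl
  refine le_antisymm (effSize_le (fun s => ?_) (fun r => ?_)) ?_
  · rw [hrow]; gcongr; split_ifs <;> simp
  · rw [hcol]; gcongr; split_ifs <;> simp
  · calc 2 * K * d = ∑ r, ∑ c, demand hm d c (server hm 0) r := by
          rw [hrow, if_pos ⟨⟨0, by omega⟩, rfl⟩]
      _ ≤ _ := rowSum_le_effSize (fun s r => ∑ c, demand hm d c s r) _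

theorem sum_map_effSize_demand (hm : 2 * K < m) (d : ℕ) (l : List (Fin (4 * K ^ 2))) :
    (l.map fun c => effSize (demand hm d c)).sum = l.length * d := by
  simp [effSize_demand, List.map_const', List.sum_replicate]

theorem length_le_of_isChain {l : List (Fin (4 * K ^ 2))} (hl : l.IsChain StartsAfter) :
    l.length ≤ 2 * K := by
  have hlt : (l.map level).IsChain (· < ·) :=
    List.isChain_map _ |>.2 <| hl.imp fun c c' h => Fin.lt_def.2 (by rw [h.2]; omega)
  simpa using (List.isChain_iff_pairwise.1 hlt).nodup.length_le_card

theorem exists_isChain_length_eq (K : ℕ) :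
    ∃ l : List (Fin (4 * K ^ 2)), l.IsChain StartsAfter ∧ l.length = 2 * K := by
  refine ⟨List.ofFn fun i : Fin (2 * K) => (coflowEquiv K).symm (i, ⟨0, i.pos⟩),
    List.isChain_ofFn.2 fun i hi => ?_, List.length_ofFn⟩
  simp [StartsAfter, IsEarly, level]
  omega

theorem demand_apply_of_level_eq (hm : 2 * K < m) (d : ℕ) {c : Fin (4 * K ^ 2)} {i : Fin (2 * K)}
    (hc : level c = i) : demand hm d c (server hm i.castSucc) (server hm i.succ) = d := by
  simp [demand, hc]

section Schedule

variable {hm : 2 * K < m} {d T : ℕ} {M : ℕ → Fin (4 * K ^ 2) → Fin m → Fin m → Bool}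

theorem level_mul_le_of_transmits (hd : 0 < d)
    (hM : DAGFeasible (4 * K ^ 2) m T (demand hm d) StartsAfter M) {c : Fin (4 * K ^ 2)}
    {t : ℕ} {s r : Fin m} (ht : M t c s r = true) : (level c : ℕ) * (K * d) ≤ t := by
  induction hc : (level c : ℕ) generalizing c t s r with
  | zero => simp
  | succ i ih =>
    have hi : i < 2 * K := by omega
    have hslots := hM.card_mul_le_sub (P := firstCoflows ⟨i, hi⟩ K (by omega))
      (a := i * (K * d)) (b := t)
      (fun c' hc' => demand_apply_of_level_eq hm d (level_of_mem_firstCoflows hc').1)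
      (fun c' hc' t' ht' => by
        obtain ⟨hlevel, hearly⟩ := level_of_mem_firstCoflows hc'
        exact ⟨ih ht' (by rw [hlevel]),
          hM.2.2.2.2 c' c ⟨hearly, by rw [hc, hlevel]⟩ t' t _ s _ r ht' ht⟩)
    rw [card_firstCoflows] at hslots
    have : 0 < K * d := Nat.mul_pos (by omega) hd
    rw [Nat.succ_mul]
    omega

theorem le_makespan (hK : 0 < K) (hd : 0 < d)
    (hM : DAGFeasible (4 * K ^ 2) m T (demand hm d) StartsAfter M) :
    (2 * K + 1) * K * d ≤ T := by
  have hslots := hM.card_mul_le_sub (P := firstCoflows ⟨2 * K - 1, by omega⟩ (2 * K) le_rfl)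
    (a := (2 * K - 1) * (K * d)) (b := T)
    (fun c hc => demand_apply_of_level_eq hm d (level_of_mem_firstCoflows hc).1)
    (fun c hc t ht => ⟨by simpa [(level_of_mem_firstCoflows hc).1] using
      level_mul_le_of_transmits hd hM ht, hM.1 t c _ _ ht⟩)
  rw [card_firstCoflows] at hslots
  have : 0 < K * d := Nat.mul_pos hK hd
  have : (2 * K + 1) * (K * d) = (2 * K - 1) * (K * d) + 2 * (K * d) := by
    rw [← add_mul, show 2 * K - 1 + 2 = 2 * K + 1 by omega]
  rw [mul_assoc] at hslots ⊢
  omega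

end Schedule

end GapInstance

/-- for every `K ≥ 1`, on an `m × m` switch with `m > 2K` there is a
single-job coflow DAG instance with `μ = 4K²` coflows whose critical-path size and
aggregate size both equal `2Kd`, but whose optimal makespan is at least
`(2K+1)·K·d = Ω(√μ·(Δ + T))`. -/
theorem dag_optimality_gap (K m d : ℕ) (hK : 0 < K) (hm : 2 * K < m) (hd : 0 < d) :
    ∃ (Dm : Fin (4 * K ^ 2) → Fin m → Fin m → ℕ)
      (prec : Fin (4 * K ^ 2) → Fin (4 * K ^ 2) → Prop),
      (∀ l : List (Fin (4 * K ^ 2)), l.Chain' prec →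
        (l.map fun c => effSize (Dm c)).sum ≤ 2 * K * d) ∧
      (∃ l : List (Fin (4 * K ^ 2)), l.Chain' prec ∧
        (l.map fun c => effSize (Dm c)).sum = 2 * K * d) ∧
      effSize (fun s r => ∑ c, Dm c s r) = 2 * K * d ∧
      (∀ T M, DAGFeasible (4 * K ^ 2) m T Dm prec M → (2 * K + 1) * K * d ≤ T) := by
  refine ⟨GapInstance.demand hm d, GapInstance.StartsAfter, fun l hl => ?_, ?_,
    GapInstance.effSize_sum_demand hK hm d, fun T M hM => GapInstance.le_makespan hK hd hM⟩
  · rw [GapInstance.sum_map_effSize_demand]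
    exact Nat.mul_le_mul_right d (GapInstance.length_le_of_isChain hl)
  · obtain ⟨l, hl, hlen⟩ := GapInstance.exists_isChain_length_eq K
    exact ⟨l, hl, by rw [GapInstance.sum_map_effSize_demand, hlen]⟩
end
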